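/- arXiv:2408.08259 — 2 statements merged into one kernel-verified Lean document; each statement's English description precedes it below -/
import Mathlib

section
/- The map Γ(B,ℓ,a,b,L) = (B*(L,a,b,B), ℓ, a−L, b−L, −L) maps the domain D into itself and is an involution on D: for every (B,ℓ,a,b,L) ∈ D one has Γ(B,ℓ,a,b,L) ∈ D and Γ(Γ(B,ℓ,a,b,L)) = (B,ℓ,a,b,L). -/
open MeasureTheory

noncomputable section

/-! ### Combinatorial definitions for NUTS orbit selection -/

/-- Floor midpoint `⌊(a+b)/2⌋`. -/
def mid (a b : ℤ) : ℤ := (a + b) / 2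

/-- `(−1)^x` for a bit `x`. -/
def signBit (x : Bool) : ℤ := if x then -1 else 1

/-- Left endpoint `a_ℓ(B)` of the orbit built from the Bernoulli directions `B` (1-indexed). -/
def aEnd (B : ℕ → Bool) : ℕ → ℤ
  | 0 => 0
  | ℓ + 1 => min (aEnd B ℓ) (aEnd B ℓ + signBit (B (ℓ + 1)) * 2 ^ ℓ)

/-- Right endpoint `b_ℓ(B)`. -/
def bEnd (B : ℕ → Bool) : ℕ → ℤ
  | 0 => 0
  | ℓ + 1 => max (bEnd B ℓ) (bEnd B ℓ + signBit (B (ℓ + 1)) * 2 ^ ℓ)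

/-- Proposed extension endpoint `ã_ℓ(B) = a_{ℓ−1}(B) + (−1)^{B_ℓ} 2^{ℓ−1}` (for `ℓ ≥ 1`). -/
def aT (B : ℕ → Bool) (ℓ : ℕ) : ℤ := aEnd B (ℓ - 1) + signBit (B ℓ) * 2 ^ (ℓ - 1)

/-- Proposed extension endpoint `b̃_ℓ(B) = b_{ℓ−1}(B) + (−1)^{B_ℓ} 2^{ℓ−1}` (for `ℓ ≥ 1`). -/
def bT (B : ℕ → Bool) (ℓ : ℕ) : ℤ := bEnd B (ℓ - 1) + signBit (B ℓ) * 2 ^ (ℓ - 1)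

/-- The binary string `β(L,a,b)`: `beta ℓ L a b i` is the `i`-th bit (1-indexed) of
`(β_i(L,a,b))_{i ∈ [1:ℓ]}`, where `[a:b]` is an interval with `b − a + 1 = 2^ℓ`. -/
def beta : ℕ → ℤ → ℤ → ℤ → ℕ → Bool
  | 0, _, _, _, _ => false
  | ℓ + 1, L, a, b, i =>
      if i = ℓ + 1 then decide (mid a b + 1 ≤ L)
      else if mid a b + 1 ≤ L then beta ℓ L (mid a b + 1) b i
      else beta ℓ L a (mid a b) i

/-- The transformed sequence `B*(L,a,b,B)`: bits `1..ℓ` come from `β(L,a,b)`, the rest from `B`. -/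
def bstar (ℓ : ℕ) (L a b : ℤ) (B : ℕ → Bool) : ℕ → Bool :=
  fun i => if 1 ≤ i ∧ i ≤ ℓ then beta ℓ L a b i else B i

/-- The domain `D`: tuples `(B, ℓ, a, b, L)` with `ℓ ∈ [1:M]`, `a = a_ℓ(B)`, `b = b_ℓ(B)`,
`a ≤ L ≤ b`. -/
def memD (M : ℕ) (B : ℕ → Bool) (ℓ : ℕ) (a b L : ℤ) : Prop :=
  1 ≤ ℓ ∧ ℓ ≤ M ∧ a = aEnd B ℓ ∧ b = bEnd B ℓ ∧ a ≤ L ∧ L ≤ b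

/-- The levels of the binary tree of subintervals of `[a:b]`: `treeLevel a b k` is the family of
intervals (coded as pairs) obtained from `[a:b]` by `k` successive halvings; with
`b − a + 1 = 2^ℓ` this is `T_{ℓ−k}([a:b])` of the paper. -/
def treeLevel (a b : ℤ) : ℕ → Set (ℤ × ℤ)
  | 0 => {(a, b)}
  | k + 1 => {p | ∃ q ∈ treeLevel a b k,
      p = (q.1, mid q.1 q.2) ∨ p = (mid q.1 q.2 + 1, q.2)}

/-- The binary tree `T([a:b]) = ∪_{j=0}^{ℓ} T_j([a:b])` of subintervals of an interval `[a:b]`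
with `b − a + 1 = 2^ℓ`. -/
def tree (ℓ : ℕ) (a b : ℤ) : Set (ℤ × ℤ) := ⋃ k ≤ ℓ, treeLevel a b k

/-! ### Leapfrog dynamics -/

/-- The state space `ℝ^d`. -/
abbrev ES (d : ℕ) := EuclideanSpace ℝ (Fin d)

/-- The momentum flip `S(θ,ρ) = (θ,−ρ)`. -/
def flipMom {d : ℕ} (p : ES d × ES d) : ES d × ES d := (p.1, -p.2)

/-- One leapfrog step of size `h` for the potential `U`. -/
def leapfrog {d : ℕ} (U : ES d → ℝ) (h : ℝ) (p : ES d × ES d) : ES d × ES d :=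
  let ρh := p.2 - (h / 2) • gradient U p.1
  let θ' := p.1 + h • ρh
  (θ', ρh - (h / 2) • gradient U θ')

/-- Integer iterates `Φ_h^i`, `i ∈ ℤ`, of the leapfrog integrator (negative iterates use the
inverse `S ∘ Φ_h ∘ S`). -/
def leapfrogIter {d : ℕ} (U : ES d → ℝ) (h : ℝ) : ℤ → ES d × ES d → ES d × ES d
  | Int.ofNat n => (leapfrog U h)^[n]
  | Int.negSucc n => (flipMom ∘ leapfrog U h ∘ flipMom)^[n + 1]

/-- The Hamiltonian `H(θ,ρ) = U(θ) + |ρ|²/2`. -/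
def Ham {d : ℕ} (U : ES d → ℝ) (p : ES d × ES d) : ℝ := U p.1 + (1 / 2) * ‖p.2‖ ^ 2

open Classical in
/-- The U-turn indicator `𝟙_Uturn(a,b,θ,ρ,h,R)` (coarse step size `hs`, fine step `hs/R`). -/
def uturnInd {d : ℕ} (U : ES d → ℝ) (hs : ℝ) (R : ℕ) (a b : ℤ) (p : ES d × ES d) : ℕ :=
  let qm := leapfrogIter U (hs / R) (R * a) p
  let qp := leapfrogIter U (hs / R) (R * b) p
  if (inner ℝ qp.2 (qp.1 - qm.1) : ℝ) < 0 ∨ (inner ℝ qm.2 (qp.1 - qm.1) : ℝ) < 0 then 1 else 0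

/-- The sub-U-turn indicator `𝟙_subUturn(a,b,θ,ρ,h,R)`, defined recursively by halving. -/
def subUturnInd {d : ℕ} (U : ES d → ℝ) (hs : ℝ) (R : ℕ) (p : ES d × ES d) (a b : ℤ) : ℕ :=
  if h : a < b then
    max (max (subUturnInd U hs R p a (mid a b)) (subUturnInd U hs R p (mid a b + 1) b))
      (uturnInd U hs R a b p)
  else 0
termination_by (b - a).toNat
decreasing_by
  · have h1 : a ≤ mid a b := by unfold mid; omega
    have h2 : mid a b < b := by unfold mid; omega
    omega
  · have h1 : a ≤ mid a b := by unfold mid; omega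
    have h2 : mid a b < b := by unfold mid; omega
    omega

/-- The number of doublings `ℓ_min(θ,ρ,B,h,R)` selected by the no-U-turn procedure with at most
`2^M` leapfrog iterates. -/
def ellMin {d : ℕ} (U : ES d → ℝ) (hs : ℝ) (R : ℕ) (M : ℕ) (B : ℕ → Bool)
    (p : ES d × ES d) : ℕ :=
  sInf ({ℓ | 1 ≤ ℓ ∧ ℓ ≤ M - 1 ∧
      (uturnInd U hs R (aEnd B ℓ) (bEnd B ℓ) p = 1 ∨
        subUturnInd U hs R p (aT B (ℓ + 1)) (bT B (ℓ + 1)) = 1)} ∪ {M})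

/-- The categorical (Boltzmann) index-selection kernel `Q(L | θ, ρ, a, b, h, R)`. -/
def Qkernel {d : ℕ} (U : ES d → ℝ) (hs : ℝ) (R : ℕ) (p : ES d × ES d)
    (a b L : ℤ) : ℝ :=
  if a ≤ L ∧ L ≤ b then
    Real.exp (-Ham U (leapfrogIter U (hs / R) (R * L) p)) /
      ∑ k ∈ Finset.Icc a b, Real.exp (-Ham U (leapfrogIter U (hs / R) (R * k) p))
  else 0

/-! ### The standard normal target -/

/-- One leapfrog step of size `h` for the standard normal potential `U(θ) = |θ|²/2`
(for which `∇U(θ) = θ`). -/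
def gaussLeapfrog {d : ℕ} (h : ℝ) (p : ES d × ES d) : ES d × ES d :=
  let ρh := p.2 - (h / 2) • p.1
  let θ' := p.1 + h • ρh
  (θ', ρh - (h / 2) • θ')

/-- Integer iterates of the standard normal leapfrog integrator. -/
def gaussLeapfrogIter {d : ℕ} (h : ℝ) : ℤ → ES d × ES d → ES d × ES d
  | Int.ofNat n => (gaussLeapfrog h)^[n]
  | Int.negSucc n => (flipMom ∘ gaussLeapfrog h ∘ flipMom)^[n + 1]

/-- The standard normal Hamiltonian `H(θ,ρ) = (|θ|² + |ρ|²)/2`. -/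
def gaussHam {d : ℕ} (p : ES d × ES d) : ℝ := (1 / 2) * (‖p.1‖ ^ 2 + ‖p.2‖ ^ 2)

/-- The modified Hamiltonian `H_h(θ,ρ) = (1 − h²/4)|θ|²/2 + |ρ|²/2` preserved by the standard
normal leapfrog integrator for `h ∈ (0,2)`. -/
def gaussHamMod {d : ℕ} (h : ℝ) (p : ES d × ES d) : ℝ :=
  (1 / 2) * (1 - h ^ 2 / 4) * ‖p.1‖ ^ 2 + (1 / 2) * ‖p.2‖ ^ 2

end

/-!
The orbit `[a_ℓ(B) : b_ℓ(B)]` has `2^ℓ` points and contains `0`. Its lower half is the orbit of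
level `ℓ - 1` exactly when `B_ℓ = 0` (the last doubling went right), so the half containing `0`
is recorded by `β_ℓ` as `B_ℓ`; recursively, `β(0, a_ℓ(B), b_ℓ(B))` reads `B` back. Conversely,
doubling along the bits `β(L, a, b)` rebuilds `[a - L : b - L]`, one half at a time. Since `β`
commutes with translations, these two facts make `Γ` an involution of `D`.
-/

lemma aEnd_succ (B : ℕ → Bool) (n : ℕ) :
    aEnd B (n + 1) = if B (n + 1) then aEnd B n - 2 ^ n else aEnd B n := by
  have : (0 : ℤ) ≤ 2 ^ n := by positivity
  cases hB : B (n + 1) <;> simp [aEnd, signBit, hB, this, ← sub_eq_add_neg]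

lemma bEnd_succ (B : ℕ → Bool) (n : ℕ) :
    bEnd B (n + 1) = if B (n + 1) then bEnd B n else bEnd B n + 2 ^ n := by
  have : (0 : ℤ) ≤ 2 ^ n := by positivity
  cases hB : B (n + 1) <;> simp [bEnd, signBit, hB, this]

lemma aEnd_nonpos (B : ℕ → Bool) (ℓ : ℕ) : aEnd B ℓ ≤ 0 := by
  induction ℓ with
  | zero => rfl
  | succ n ih =>
    have : (0 : ℤ) ≤ 2 ^ n := by positivity
    rw [aEnd_succ]; split_ifs <;> omega

lemma bEnd_nonneg (B : ℕ → Bool) (ℓ : ℕ) : 0 ≤ bEnd B ℓ := by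
  induction ℓ with
  | zero => rfl
  | succ n ih => rw [bEnd_succ]; split_ifs <;> positivity

lemma bEnd_eq_aEnd_add (B : ℕ → Bool) (ℓ : ℕ) : bEnd B ℓ = aEnd B ℓ + 2 ^ ℓ - 1 := by
  induction ℓ with
  | zero => rfl
  | succ n ih => rw [aEnd_succ, bEnd_succ, pow_succ]; split_ifs <;> omega

lemma aEnd_congr {B C : ℕ → Bool} {ℓ : ℕ} (h : ∀ i, 1 ≤ i → i ≤ ℓ → B i = C i) :
    aEnd B ℓ = aEnd C ℓ := by
  induction ℓ with
  | zero => rfl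
  | succ n ih =>
    rw [aEnd_succ, aEnd_succ, ih fun i h1 h2 => h i h1 (by omega), h (n + 1) (by omega) le_rfl]

lemma mid_eq_of_length (a : ℤ) (n : ℕ) : mid a (a + 2 ^ (n + 1) - 1) = a + 2 ^ n - 1 := by
  unfold mid; rw [pow_succ]; omega

lemma beta_add (ℓ : ℕ) (L a b c : ℤ) (i : ℕ) :
    beta ℓ (L + c) (a + c) (b + c) i = beta ℓ L a b i := by
  induction ℓ generalizing a b with
  | zero => rfl
  | succ n ih =>
    have hmid : mid (a + c) (b + c) = mid a b + c := by unfold mid; omega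
    simp only [beta, hmid, add_right_comm _ c 1, add_le_add_iff_right, ih]

lemma beta_zero_aEnd_bEnd (B : ℕ → Bool) {ℓ i : ℕ} (hi₁ : 1 ≤ i) (hiℓ : i ≤ ℓ) :
    beta ℓ 0 (aEnd B ℓ) (bEnd B ℓ) i = B i := by
  induction ℓ with
  | zero => omega
  | succ n ih =>
    have ha := aEnd_nonpos B n
    have hb := bEnd_nonneg B n
    have hab := bEnd_eq_aEnd_add B n
    rw [aEnd_succ, bEnd_succ]
    cases hB : B (n + 1)
    · have hmid : mid (aEnd B n) (bEnd B n + 2 ^ n) = bEnd B n := by unfold mid; omega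
      have hlow : ¬ bEnd B n + 1 ≤ 0 := by omega
      rcases Nat.lt_or_eq_of_le hiℓ with hlt | rfl
      · simp only [beta, if_neg hlt.ne, Bool.false_eq_true, if_false, hmid, if_neg hlow]
        exact ih (Nat.lt_succ_iff.mp hlt)
      · simp only [beta, Bool.false_eq_true, if_false, hmid, decide_eq_false hlow, hB, if_true]
    · have hmid : mid (aEnd B n - 2 ^ n) (bEnd B n) = aEnd B n - 1 := by unfold mid; omega
      rcases Nat.lt_or_eq_of_le hiℓ with hlt | rfl
      · simp only [beta, if_neg hlt.ne, if_true, hmid, sub_add_cancel, if_pos ha]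
        exact ih (Nat.lt_succ_iff.mp hlt)
      · simp only [beta, if_true, hmid, sub_add_cancel, decide_eq_true ha, hB]

lemma aEnd_beta (ℓ : ℕ) {L a : ℤ} (haL : a ≤ L) (hL : L ≤ a + 2 ^ ℓ - 1) :
    aEnd (beta ℓ L a (a + 2 ^ ℓ - 1)) ℓ = a - L := by
  induction ℓ generalizing a with
  | zero => simp only [pow_zero] at hL; simp only [aEnd]; omega
  | succ n ih =>
    have h2n : (0 : ℤ) < 2 ^ n := by positivity
    rw [pow_succ] at hL
    rw [aEnd_succ, beta, if_pos rfl, mid_eq_of_length]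
    by_cases hR : a + 2 ^ n - 1 + 1 ≤ L
    · have hhalf : ∀ i, 1 ≤ i → i ≤ n → beta (n + 1) L a (a + 2 ^ (n + 1) - 1) i =
          beta n L (a + 2 ^ n) (a + 2 ^ n + 2 ^ n - 1) i := by
        intro i _ hi
        rw [beta, if_neg (by omega), mid_eq_of_length, if_pos hR, pow_succ]
        congr 1 <;> ring
      rw [aEnd_congr hhalf, ih (by omega) (by omega), decide_eq_true hR, if_pos rfl]
      ring
    · have hhalf : ∀ i, 1 ≤ i → i ≤ n → beta (n + 1) L a (a + 2 ^ (n + 1) - 1) i =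
          beta n L a (a + 2 ^ n - 1) i := by
        intro i _ hi
        rw [beta, if_neg (by omega), mid_eq_of_length, if_neg hR]
      rw [aEnd_congr hhalf, ih haL (by omega), decide_eq_false hR]
      simp

/-- The map `Γ(B,ℓ,a,b,L) = (B*(L,a,b,B), ℓ, a−L, b−L, −L)` maps the domain `D`
into itself and is an involution on `D`. -/
theorem Gamma_involution (M ℓ : ℕ) (B : ℕ → Bool) (a b L : ℤ) (hD : memD M B ℓ a b L) :
    memD M (bstar ℓ L a b B) ℓ (a - L) (b - L) (-L) ∧
    bstar ℓ (-L) (a - L) (b - L) (bstar ℓ L a b B) = B ∧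
    a - L - -L = a ∧ b - L - -L = b ∧ -(-L) = L := by
  obtain ⟨hℓ₁, hℓM, ha, hb, haL, hLb⟩ := hD
  have hlen : b = a + 2 ^ ℓ - 1 := by rw [ha, hb, bEnd_eq_aEnd_add]
  have ha₀ : a ≤ 0 := ha ▸ aEnd_nonpos B ℓ
  have hb₀ : 0 ≤ b := hb ▸ bEnd_nonneg B ℓ
  have hbits : ∀ i, 1 ≤ i → i ≤ ℓ → bstar ℓ L a b B i = beta ℓ L a b i :=
    fun i h₁ h₂ => if_pos ⟨h₁, h₂⟩
  have haEnd : aEnd (bstar ℓ L a b B) ℓ = a - L := by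
    rw [aEnd_congr hbits, hlen, aEnd_beta ℓ haL (hlen ▸ hLb)]
  have hbEnd : bEnd (bstar ℓ L a b B) ℓ = b - L := by
    rw [bEnd_eq_aEnd_add, haEnd, hlen]; ring
  refine ⟨⟨hℓ₁, hℓM, haEnd.symm, hbEnd.symm, by omega, by omega⟩, ?_, by ring, by ring, by ring⟩
  funext i
  by_cases hi : 1 ≤ i ∧ i ≤ ℓ
  · rw [bstar, if_pos hi, ← beta_zero_aEnd_bEnd B hi.1 hi.2, ← ha, ← hb]
    simpa [sub_eq_add_neg] using beta_add ℓ 0 a b (-L) i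
  · rw [bstar, if_neg hi, bstar, if_neg hi]
end

section
/- For the standard normal target in dimension d, h ∈ (0,2), and any (θ,ρ) ∈ ℝ^{2d}, the energy error envelope along the two-sided leapfrog path is controlled by the modified Hamiltonian: for all i, j ∈ ℤ, H(Φ_h^i(θ,ρ)) − H(Φ_h^j(θ,ρ)) ≤ (h²/(4 − h²)) · H_h(θ,ρ). In particular, (H⁺ − H⁻)(Φ_h^i(θ,ρ)) ≤ (h²/(4 − h²)) · H_h(θ,ρ) for every i ∈ ℤ, where H⁺ and H⁻ denote the supremum and infimum of H over the leapfrog path through the given point. -/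
open MeasureTheory

/-! Leapfrog exactly conserves the modified Hamiltonian `H_h = H - (h²/8)|θ|²`, so along the
path `H(Φ^i) - H(Φ^j) = (h²/8)(|θ_i|² - |θ_j|²) ≤ (h²/8)|θ_i|²`. Since
`H_h ≥ (1 - h²/4)|θ|²/2`, this is at most `(h²/(4 - h²)) H_h`. -/

section GaussLeapfrog

variable {d : ℕ}

theorem gaussHam_eq_gaussHamMod_add (h : ℝ) (q : ES d × ES d) :
    gaussHam q = gaussHamMod h q + h ^ 2 / 8 * ‖q.1‖ ^ 2 := by
  simp only [gaussHam, gaussHamMod]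
  ring

theorem gaussHamMod_comp_gaussLeapfrog (h : ℝ) :
    gaussHamMod h ∘ gaussLeapfrog h = (gaussHamMod h : ES d × ES d → ℝ) := by
  funext q
  simp only [Function.comp_apply, gaussHamMod, gaussLeapfrog, ← real_inner_self_eq_norm_sq,
    inner_add_left, inner_add_right, inner_sub_left, inner_sub_right, inner_smul_left,
    inner_smul_right, real_inner_comm q.1 q.2, conj_trivial]
  ring

theorem gaussHamMod_comp_flipMom (h : ℝ) :
    gaussHamMod h ∘ flipMom = (gaussHamMod h : ES d × ES d → ℝ) := by
  funext q
  simp [gaussHamMod, flipMom]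

theorem gaussHamMod_gaussLeapfrogIter (h : ℝ) (i : ℤ) (p : ES d × ES d) :
    gaussHamMod h (gaussLeapfrogIter h i p) = gaussHamMod h p := by
  cases i with
  | ofNat n => exact congrFun (Function.iterate_invariant (gaussHamMod_comp_gaussLeapfrog h) n) p
  | negSucc n =>
    have hconj : gaussHamMod h ∘ (flipMom ∘ gaussLeapfrog h ∘ flipMom) =
        (gaussHamMod h : ES d × ES d → ℝ) := by
      rw [← Function.comp_assoc, gaussHamMod_comp_flipMom, ← Function.comp_assoc,
        gaussHamMod_comp_gaussLeapfrog, gaussHamMod_comp_flipMom]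
    exact congrFun (Function.iterate_invariant hconj (n + 1)) p

theorem sq_div_eight_mul_norm_fst_sq_le {h : ℝ} (h2 : h ^ 2 < 4) (q : ES d × ES d) :
    h ^ 2 / 8 * ‖q.1‖ ^ 2 ≤ h ^ 2 / (4 - h ^ 2) * gaussHamMod h q := by
  have h4 : 0 < 4 - h ^ 2 := by linarith
  have hθ : (4 - h ^ 2) / 8 * ‖q.1‖ ^ 2 ≤ gaussHamMod h q := by
    unfold gaussHamMod
    nlinarith [sq_nonneg ‖q.2‖]
  calc h ^ 2 / 8 * ‖q.1‖ ^ 2 = h ^ 2 / (4 - h ^ 2) * ((4 - h ^ 2) / 8 * ‖q.1‖ ^ 2) := by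
        field_simp
    _ ≤ h ^ 2 / (4 - h ^ 2) * gaussHamMod h q := by gcongr

end GaussLeapfrog

/-- For the standard normal target and `h ∈ (0,2)`, the energy error envelope
along the two-sided leapfrog path is controlled by the modified Hamiltonian:
`H(Φ_h^i(θ,ρ)) − H(Φ_h^j(θ,ρ)) ≤ (h²/(4 − h²))·H_h(θ,ρ)` for all `i, j ∈ ℤ`. -/
theorem gauss_energy_error_envelope {d : ℕ} (h : ℝ) (h0 : 0 < h) (h2 : h < 2)
    (p : ES d × ES d) :
    ∀ i j : ℤ,
      gaussHam (gaussLeapfrogIter h i p) - gaussHam (gaussLeapfrogIter h j p) ≤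
        h ^ 2 / (4 - h ^ 2) * gaussHamMod h p := by
  intro i j
  have hh : h ^ 2 < 4 := by nlinarith
  set qi := gaussLeapfrogIter h i p
  set qj := gaussLeapfrogIter h j p
  calc gaussHam qi - gaussHam qj = h ^ 2 / 8 * ‖qi.1‖ ^ 2 - h ^ 2 / 8 * ‖qj.1‖ ^ 2 := by
        rw [gaussHam_eq_gaussHamMod_add h qi, gaussHam_eq_gaussHamMod_add h qj,
          gaussHamMod_gaussLeapfrogIter, gaussHamMod_gaussLeapfrogIter]
        ring
    _ ≤ h ^ 2 / 8 * ‖qi.1‖ ^ 2 := by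
        have : 0 ≤ h ^ 2 / 8 * ‖qj.1‖ ^ 2 := by positivity
        linarith
    _ ≤ h ^ 2 / (4 - h ^ 2) * gaussHamMod h qi := sq_div_eight_mul_norm_fst_sq_le hh qi
    _ = h ^ 2 / (4 - h ^ 2) * gaussHamMod h p := by rw [gaussHamMod_gaussLeapfrogIter]
end
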